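/- On ℝ^3 with coordinates (x, y, z), let g be the metric dx⊗dx + 2*e^{-x}*(dy⊗dz + dz⊗dy). Then each of the six vector fields ∂_y, ∂_z, 2*∂_x + y*∂_y + z*∂_z, y*∂_y - z*∂_z, 2*y*∂_x + y^2*∂_y - e^x*∂_z, 2*z*∂_x - e^x*∂_y + z^2*∂_z is a Killing vector field of g, i.e., satisfies L_X(g) = 0. -/

import Mathlib

/-!
Writing `V = (a, b, c)`, the components of `L_V g` are `2 ∂ₓa`, `∂_y a + 2e^{-x} ∂ₓc`,
`∂_z a + 2e^{-x} ∂ₓb`, `4e^{-x} ∂_y c`, `4e^{-x} ∂_z b` and `2e^{-x} (∂_y b + ∂_z c - a)`,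
the last `-a` coming from `V(e^{-x}) = -a e^{-x}`. So being Killing is a linear condition on
the Jacobian of `V` and on `a`, which each of the six fields satisfies by direct differentiation.
-/

namespace Stmt9

/-- Points of `ℝ³` with coordinates `(x, y, z)`. -/
abbrev Pt := Fin 3 → ℝ

/-- The constant-curvature metric `g = dx⊗dx + 2 e^{−x} (dy⊗dz + dz⊗dy)`. -/
noncomputable def g : Pt → Fin 3 → Fin 3 → ℝ := fun q =>
  !![1, 0, 0; 0, 0, 2 * Real.exp (-(q 0)); 0, 2 * Real.exp (-(q 0)), 0]

/-- The `(i,j)` component of the Lie derivative of the symmetric (0,2)-tensor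
with components `h` along the vector field `V`:
`(L_V h)_{ij} = V(h_{ij}) + Σ_k h_{kj} ∂_i V^k + Σ_k h_{ik} ∂_j V^k`. -/
noncomputable def lieDerivMetric (V : Pt → Pt) (h : Pt → Fin 3 → Fin 3 → ℝ)
    (q : Pt) (i j : Fin 3) : ℝ :=
  fderiv ℝ (fun r => h r i j) q (V q)
    + ∑ k, h q k j * fderiv ℝ (fun r => V r k) q (Pi.single i 1)
    + ∑ k, h q i k * fderiv ℝ (fun r => V r k) q (Pi.single j 1)

theorem fderiv_coord_apply {n : ℕ} (k : Fin n) (q v : Fin n → ℝ) :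
    fderiv ℝ (fun r : Fin n → ℝ => r k) q v = v k := by
  rw [(hasFDerivAt_apply k q).fderiv]
  rfl

noncomputable def jacobian {n : ℕ} (V : (Fin n → ℝ) → Fin n → ℝ) (q : Fin n → ℝ) :
    Matrix (Fin n) (Fin n) ℝ :=
  Matrix.of fun k i => fderiv ℝ (fun r => V r k) q (Pi.single i 1)

theorem lieDerivMetric_g_eq_zero {V : Pt → Pt} {q : Pt}
    (h00 : jacobian V q 0 0 = 0) (h21 : jacobian V q 2 1 = 0) (h12 : jacobian V q 1 2 = 0)
    (h01 : jacobian V q 0 1 + 2 * Real.exp (-(q 0)) * jacobian V q 2 0 = 0)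
    (h02 : jacobian V q 0 2 + 2 * Real.exp (-(q 0)) * jacobian V q 1 0 = 0)
    (h11_22 : jacobian V q 1 1 + jacobian V q 2 2 = V q 0) (i j : Fin 3) :
    lieDerivMetric V g q i j = 0 := by
  simp only [jacobian, Matrix.of_apply] at *
  fin_cases i <;> fin_cases j <;>
    simp (disch := fun_prop) only [lieDerivMetric, g, Fin.isValue, Fin.zero_eta, Fin.mk_one,
      Fin.reduceFinMk, Matrix.of_apply, Matrix.cons_val', Matrix.cons_val, Matrix.cons_val_zero,
      Matrix.cons_val_one, Matrix.cons_val_fin_one, Fin.sum_univ_three, fderiv_fun_const,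
      fderiv_const_mul, fderiv_exp, fderiv_fun_neg, fderiv_coord_apply, Pi.zero_apply, zero_apply,
      neg_apply, smul_apply, smul_eq_mul, zero_mul, one_mul, add_zero, zero_add]
  · linear_combination 2 * h00
  · linear_combination h01
  · linear_combination h02
  · linear_combination h01
  · linear_combination 4 * Real.exp (-(q 0)) * h21
  · linear_combination 2 * Real.exp (-(q 0)) * h11_22
  · linear_combination h02
  · linear_combination 2 * Real.exp (-(q 0)) * h11_22
  · linear_combination 4 * Real.exp (-(q 0)) * h12

theorem so4_killing :
    ∀ V ∈ ({(fun _ => ![0, 1, 0]),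
            (fun _ => ![0, 0, 1]),
            (fun q => ![2, q 1, q 2]),
            (fun q => ![0, q 1, -(q 2)]),
            (fun q => ![2 * q 1, (q 1) ^ 2, -Real.exp (q 0)]),
            (fun q => ![2 * q 2, -Real.exp (q 0), (q 2) ^ 2])} : Set (Pt → Pt)),
      ∀ (q : Pt) (i j : Fin 3), lieDerivMetric V g q i j = 0 := by
  intro V hV q
  rcases hV with rfl | rfl | rfl | rfl | rfl | rfl <;>
    apply lieDerivMetric_g_eq_zero <;>
    simp (disch := fun_prop) [jacobian, fderiv_coord_apply, fderiv_const_mul, fderiv_fun_pow,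
      Pi.single_apply, mul_assoc, ← Real.exp_add, one_add_one_eq_two]

end Stmt9
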